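/- Suppose cof(θ) > ω, α is a countable ordinal, and β > α·2. Then the game DG^β_{θ,α} detects membership in 𝒮_θ: for any binary-relation structures M₀ = (M₀,R₀) ∈ 𝒮_θ and M₁ = (M₁,R₁) ∉ 𝒮_θ, Adam has a winning strategy in DG^β_{θ,α}(M₀,M₁). -/

import Mathlib

open Cardinal Set

universe u

namespace DGRel

/- The similarity game `DG^β_{θ,α}` of Väänänen–Veličković, specialised to structures
`(M₀, R₀)`, `(M₁, R₁)` with a single binary relation (this covers in particular linear
orders, with `R = (<)`). -/

variable {M N : Type u} (R0 : M → M → Prop) (R1 : N → N → Prop)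

/-- A partial isomorphism between `(M, R0)` and `(N, R1)`, given as the graph of a
partial map: functional, injective, and preserving the relation in both directions. -/
def IsPartialIso (g : Set (M × N)) : Prop :=
  (∀ ⦃a : M⦄ ⦃b b' : N⦄, (a, b) ∈ g → (a, b') ∈ g → b = b') ∧
  (∀ ⦃a a' : M⦄ ⦃b : N⦄, (a, b) ∈ g → (a', b) ∈ g → a = a') ∧
  (∀ ⦃a a' : M⦄ ⦃b b' : N⦄, (a, b) ∈ g → (a', b') ∈ g → (R0 a a' ↔ R1 b b'))

/-- A `(θ, α)`-position in the similarity game on `(M, N)`:  a clock ordinal `ht`, sets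
`A0 ⊆ M`, `A1 ⊆ N` of cardinality `≤ θ`, a partial isomorphism `g` between them, and
height functions `h0`, `h1` taking values `< α` on `A0`, `A1`, such that every element of
height `0` is matched by `g`. -/
structure Position (R0 : M → M → Prop) (R1 : N → N → Prop)
    (θ : Cardinal.{u}) (α : Ordinal.{u}) : Type (u + 1) where
  ht : Ordinal.{u}
  A0 : Set M
  A1 : Set N
  A0_card : #A0 ≤ θ
  A1_card : #A1 ≤ θ
  g : Set (M × N)
  g_iso : IsPartialIso R0 R1 g
  g_sub : g ⊆ A0 ×ˢ A1
  h0 : M → Ordinal.{u}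
  h1 : N → Ordinal.{u}
  h0_lt : ∀ a ∈ A0, h0 a < α
  h1_lt : ∀ b ∈ A1, h1 b < α
  h0_zero : ∀ a ∈ A0, h0 a = 0 → ∃ b, (a, b) ∈ g
  h1_zero : ∀ b ∈ A1, h1 b = 0 → ∃ a, (a, b) ∈ g

variable {θ : Cardinal.{u}} {α : Ordinal.{u}}

/-- `q` extends `p` (written `q < p` in the paper): the clock strictly decreases, the sets
grow, the partial isomorphism of `q` restricted to the old sets is that of `p`, and every
height strictly decreases unless it is already `0`. -/
def Extends (q p : Position R0 R1 θ α) : Prop :=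
  q.ht < p.ht ∧ p.A0 ⊆ q.A0 ∧ p.A1 ⊆ q.A1 ∧
  p.g ⊆ q.g ∧ (∀ a b, (a, b) ∈ q.g → a ∈ p.A0 → (a, b) ∈ p.g) ∧
  (∀ a ∈ p.A0, q.h0 a ≤ p.h0 a ∧ (p.h0 a ≠ 0 → q.h0 a < p.h0 a)) ∧
  (∀ b ∈ p.A1, q.h1 b ≤ p.h1 b ∧ (p.h1 b ≠ 0 → q.h1 b < p.h1 b))

/-- The starting position `(β, ∅, ∅, ∅, ∅)`. -/
def startPos (β : Ordinal.{u}) : Position R0 R1 θ α where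
  ht := β
  A0 := ∅
  A1 := ∅
  A0_card := by simp
  A1_card := by simp
  g := ∅
  g_iso := by refine ⟨?_, ?_, ?_⟩ <;> intros <;> simp_all
  g_sub := by simp
  h0 := fun _ => 0
  h1 := fun _ => 0
  h0_lt := by simp
  h1_lt := by simp
  h0_zero := by simp
  h1_zero := by simp

/-- Eve has a winning strategy in the similarity game from position `p`:  whatever clock
ordinal `β' < ht p` and sets `B0`, `B1` of size `≤ θ` Adam demands, Eve can move to an
extending position covering them from which she again has a winning strategy.  (Since the
clock strictly decreases, the game is finite, and this well-founded recursion captures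
exactly the existence of a winning strategy for Eve.) -/
noncomputable def EveWinsFrom (p : Position R0 R1 θ α) : Prop :=
  WellFounded.fix (C := fun _ : Ordinal.{u} => Position R0 R1 θ α → Prop) Ordinal.lt_wf
    (fun o IH p =>
      ∀ β' (hβ : β' < o) (B0 : Set M) (B1 : Set N), #B0 ≤ θ → #B1 ≤ θ →
        ∃ q : Position R0 R1 θ α, Extends R0 R1 q p ∧ q.ht = β' ∧
          B0 ⊆ q.A0 ∧ B1 ⊆ q.A1 ∧ IH β' hβ q)
    p.ht p

/-- Eve has a winning strategy in the game `DG^β_{θ,α}((M,R0), (N,R1))`. -/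
noncomputable def EveWinsGame (β : Ordinal.{u}) (θ : Cardinal.{u}) (α : Ordinal.{u}) : Prop :=
  EveWinsFrom R0 R1 (startPos R0 R1 (θ := θ) (α := α) β)

/-- Adam has a winning strategy from position `p`: he can demand a clock ordinal
`β' < ht p` and sets `B0`, `B1` of size `≤ θ` such that every legal reply of Eve leads to
a position from which Adam again has a winning strategy (in particular, if Eve has no
legal reply, she loses). -/
inductive AdamWinsFrom : Position R0 R1 θ α → Prop where
  | step (p : Position R0 R1 θ α) (β' : Ordinal.{u}) (hβ : β' < p.ht)
      (B0 : Set M) (B1 : Set N) (hB0 : #B0 ≤ θ) (hB1 : #B1 ≤ θ)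
      (h : ∀ q : Position R0 R1 θ α, Extends R0 R1 q p → q.ht = β' →
        B0 ⊆ q.A0 → B1 ⊆ q.A1 → AdamWinsFrom q) :
      AdamWinsFrom p

/-- Adam has a winning strategy in the game `DG^β_{θ,α}((M,R0), (N,R1))`. -/
def AdamWinsGame (β : Ordinal.{u}) (θ : Cardinal.{u}) (α : Ordinal.{u}) : Prop :=
  AdamWinsFrom R0 R1 (startPos R0 R1 (θ := θ) (α := α) β)

/-- A position of the infinite game `DG_{θ,α}` (no clock ordinal). -/
structure IPosition (R0 : M → M → Prop) (R1 : N → N → Prop)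
    (θ : Cardinal.{u}) (α : Ordinal.{u}) : Type (u + 1) where
  A0 : Set M
  A1 : Set N
  A0_card : #A0 ≤ θ
  A1_card : #A1 ≤ θ
  g : Set (M × N)
  g_iso : IsPartialIso R0 R1 g
  g_sub : g ⊆ A0 ×ˢ A1
  h0 : M → Ordinal.{u}
  h1 : N → Ordinal.{u}
  h0_lt : ∀ a ∈ A0, h0 a < α
  h1_lt : ∀ b ∈ A1, h1 b < α
  h0_zero : ∀ a ∈ A0, h0 a = 0 → ∃ b, (a, b) ∈ g
  h1_zero : ∀ b ∈ A1, h1 b = 0 → ∃ a, (a, b) ∈ g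

/-- Extension of positions in the infinite game. -/
def IExtends (q p : IPosition R0 R1 θ α) : Prop :=
  p.A0 ⊆ q.A0 ∧ p.A1 ⊆ q.A1 ∧
  p.g ⊆ q.g ∧ (∀ a b, (a, b) ∈ q.g → a ∈ p.A0 → (a, b) ∈ p.g) ∧
  (∀ a ∈ p.A0, q.h0 a ≤ p.h0 a ∧ (p.h0 a ≠ 0 → q.h0 a < p.h0 a)) ∧
  (∀ b ∈ p.A1, q.h1 b ≤ p.h1 b ∧ (p.h1 b ≠ 0 → q.h1 b < p.h1 b))

/-- The empty starting position of the infinite game. -/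
def startIPos : IPosition R0 R1 θ α where
  A0 := ∅
  A1 := ∅
  A0_card := by simp
  A1_card := by simp
  g := ∅
  g_iso := by refine ⟨?_, ?_, ?_⟩ <;> intros <;> simp_all
  g_sub := by simp
  h0 := fun _ => 0
  h1 := fun _ => 0
  h0_lt := by simp
  h1_lt := by simp
  h0_zero := by simp
  h1_zero := by simp

/-- Eve has a winning strategy in the infinite game `DG_{θ,α}` of length `ω`.  Since this
game is closed for Eve, having a winning strategy is equivalent to having a positional
one, i.e. a set `K` of positions containing the starting position such that Eve can
answer any challenge of Adam while staying inside `K`. -/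
def EveWinsInfGame (θ : Cardinal.{u}) (α : Ordinal.{u}) : Prop :=
  ∃ K : Set (IPosition R0 R1 θ α), startIPos R0 R1 ∈ K ∧
    ∀ p ∈ K, ∀ (B0 : Set M) (B1 : Set N), #B0 ≤ θ → #B1 ≤ θ →
      ∃ q ∈ K, IExtends R0 R1 q p ∧ B0 ⊆ q.A0 ∧ B1 ⊆ q.A1

end DGRel

/-!
Fix `a₁ ∈ M₁` with at least `θ` many `R₁`-neighbours. Adam first adds `a₁`, and then keeps
Eve lowering its height until she must match it with some `a₀ ∈ M₀`; at that point he still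
has a clock above `α`. Now he demands `θ` many neighbours of `a₁`. Fewer than `θ` of them can
ever be matched, since they correspond to neighbours of `a₀`, so `θ` many stay unmatched and
have nonzero heights below `α`. As `α` is countable and `cof θ > ω`, `θ` many of them share
one height `δ ≠ 0`; playing clock `δ` forces all of them strictly lower, and repeating this
produces a strictly decreasing sequence of ordinals.
-/

namespace Cardinal

theorem exists_le_mk_sep_eq_of_mapsTo_countable {X : Type u} {ι : Type*} {θ : Cardinal.{u}}
    (hθ : ℵ₀ < θ.ord.cof) {s : Set X} (hs : θ ≤ #s) {C : Set ι} (hC : C.Countable)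
    {f : X → ι} (hf : MapsTo f s C) : ∃ c ∈ C, θ ≤ #{x ∈ s | f x = c} := by
  have : Countable C := hC.to_subtype
  let e := equivShrink.{u} C
  have : Countable (Shrink.{u} C) := Countable.of_equiv _ e
  obtain ⟨a, t, hts, hθt, hta⟩ := infinite_pigeonhole_set (fun x : s => e ⟨f x, hf x.2⟩) θ hs
    (hθ.le.trans (Ordinal.cof_ord_le θ)) (mk_le_aleph0.trans_lt hθ)
  refine ⟨(e.symm a).1, (e.symm a).2, hθt.trans (mk_le_mk_of_subset fun x hx => ⟨hts hx, ?_⟩)⟩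
  rw [← hta hx, e.symm_apply_apply]

end Cardinal

namespace DGRel

variable {M₀ M₁ : Type u} {R₀ : M₀ → M₀ → Prop} {R₁ : M₁ → M₁ → Prop}
  {θ : Cardinal.{u}} {α : Ordinal.{u}}

theorem IsPartialIso.mk_matched_neighbours_le {g : Set (M₀ × M₁)} (hg : IsPartialIso R₀ R₁ g)
    {a₀ : M₀} {a₁ : M₁} (h : (a₀, a₁) ∈ g) :
    #{b | R₁ a₁ b ∧ ∃ a, (a, b) ∈ g} ≤ #{a | R₀ a₀ a} := by
  choose f hf using fun b : {b | R₁ a₁ b ∧ ∃ a, (a, b) ∈ g} => b.2.2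
  refine mk_le_of_injective (f := fun b => ⟨f b, (hg.2.2 h (hf b)).2 b.2.1⟩) fun b b' hbb' => ?_
  have hfb : f b = f b' := congrArg Subtype.val hbb'
  exact Subtype.ext (hg.1 (hf b) (by rw [hfb]; exact hf b'))

theorem Position.exists_level_le_mk (hθ : ℵ₀ < θ.ord.cof) (h₀ : ∀ a : M₀, #{b | R₀ a b} < θ)
    (p : Position R₀ R₁ θ α) {a₀ : M₀} {a₁ : M₁} (hg : (a₀, a₁) ∈ p.g) {T : Set M₁}
    (hTA : T ⊆ p.A1) (hTR : T ⊆ {b | R₁ a₁ b}) (hθT : θ ≤ #T) {γ : Ordinal.{u}}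
    (hγ : γ.card ≤ ℵ₀) (hTγ : ∀ b ∈ T, p.h1 b < γ) :
    ∃ δ < γ, δ ≠ 0 ∧ θ ≤ #{b ∈ T | p.h1 b = δ} := by
  have hθ₀ : ℵ₀ ≤ θ := hθ.le.trans (Ordinal.cof_ord_le θ)
  set U := {b ∈ T | ¬∃ a, (a, b) ∈ p.g}
  have hθU : θ ≤ #U := by
    by_contra! hU
    have hmatched : #{b ∈ T | ∃ a, (a, b) ∈ p.g} < θ :=
      (mk_le_mk_of_subset (t := {b | R₁ a₁ b ∧ ∃ a, (a, b) ∈ p.g})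
        fun b hb => ⟨hTR hb.1, hb.2⟩).trans_lt
        ((p.g_iso.mk_matched_neighbours_le hg).trans_lt (h₀ a₀))
    refine hθT.not_gt ((mk_le_mk_of_subset fun b hb => ?_).trans_lt
      ((mk_union_le _ _).trans_lt (add_lt_of_lt hθ₀ hmatched hU)))
    exact (em (∃ a, (a, b) ∈ p.g)).imp (⟨hb, ·⟩) (⟨hb, ·⟩)
  have hcount : (Iio γ \ {0}).Countable := by
    refine Countable.mono sdiff_subset ?_
    rw [← le_aleph0_iff_set_countable, mk_Iio_ordinal, ← lift_aleph0.{u + 1, u}, lift_le]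
    exact hγ
  have hmaps : MapsTo p.h1 U (Iio γ \ {0}) := fun b hb =>
    ⟨hTγ b hb.1, fun h0 => hb.2 (p.h1_zero b (hTA hb.1) h0)⟩
  obtain ⟨δ, ⟨hδγ, hδ0⟩, hθδ⟩ := exists_le_mk_sep_eq_of_mapsTo_countable hθ hθU hcount hmaps
  exact ⟨δ, hδγ, hδ0, hθδ.trans (mk_le_mk_of_subset fun b hb => ⟨hb.1.1, hb.2⟩)⟩

theorem adamWinsFrom_of_matched_of_le_mk_neighbours (hθ : ℵ₀ < θ.ord.cof)
    (h₀ : ∀ a : M₀, #{b | R₀ a b} < θ) {γ : Ordinal.{u}} (hγ : γ.card ≤ ℵ₀)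
    (p : Position R₀ R₁ θ α) (hγp : γ ≤ p.ht) {a₀ : M₀} {a₁ : M₁} (hg : (a₀, a₁) ∈ p.g)
    {T : Set M₁} (hTA : T ⊆ p.A1) (hTR : T ⊆ {b | R₁ a₁ b}) (hθT : θ ≤ #T)
    (hTγ : ∀ b ∈ T, p.h1 b < γ) : AdamWinsFrom R₀ R₁ p := by
  induction γ using WellFoundedLT.induction generalizing p T with
  | ind γ ih =>
    obtain ⟨δ, hδγ, hδ0, hθδ⟩ := p.exists_level_le_mk hθ h₀ hg hTA hTR hθT hγ hTγ
    refine .step p δ (hδγ.trans_le hγp) ∅ ∅ (by simp) (by simp) fun q hqp hqδ _ _ => ?_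
    obtain ⟨-, -, hA1, hg_sub, -, -, hh1⟩ := hqp
    refine ih δ hδγ ((Ordinal.card_le_card hδγ.le).trans hγ) q hqδ.ge (hg_sub hg)
      (fun b hb => hA1 (hTA hb.1)) (fun b hb => hTR hb.1) hθδ fun b hb => ?_
    rw [← hb.2]
    exact (hh1 b (hTA hb.1)).2 (hb.2 ▸ hδ0)

theorem adamWinsFrom_of_le_mk_neighbours (hθ : ℵ₀ < θ.ord.cof) (hα : α.card ≤ ℵ₀)
    (h₀ : ∀ a : M₀, #{b | R₀ a b} < θ) {a₁ : M₁} (ha₁ : θ ≤ #{b | R₁ a₁ b})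
    (p : Position R₀ R₁ θ α) (hp : a₁ ∈ p.A1) (hαp : α + p.h1 a₁ < p.ht) :
    AdamWinsFrom R₀ R₁ p := by
  induction hγ : p.h1 a₁ using WellFoundedLT.induction generalizing p with
  | ind γ ih =>
    rcases eq_or_ne γ 0 with rfl | hγ0
    · obtain ⟨a₀, hg⟩ := p.h1_zero a₁ hp hγ
      obtain ⟨S, hSR, hθS⟩ := le_mk_iff_exists_subset.mp ha₁
      have hαp' : α < p.ht := by simpa [hγ] using hαp
      refine .step p α hαp' ∅ S (by simp) hθS.le fun q hqp hqα _ hSq => ?_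
      exact adamWinsFrom_of_matched_of_le_mk_neighbours hθ h₀ hα q hqα.ge (hqp.2.2.2.1 hg) hSq
        hSR hθS.ge fun b hb => q.h1_lt b (hSq hb)
    · refine .step p (α + γ) (hγ ▸ hαp) ∅ ∅ (by simp) (by simp) fun q hqp hqγ _ _ => ?_
      obtain ⟨-, -, hA1, -, -, -, hh1⟩ := hqp
      have hlt : q.h1 a₁ < γ := hγ ▸ (hh1 a₁ hp).2 (hγ ▸ hγ0)
      exact ih _ hlt q (hA1 hp) (hqγ ▸ (add_lt_add_iff_left α).2 hlt) rfl

end DGRel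

open DGRel in
/-- Suppose `cof(θ) > ω`, `α` is a countable ordinal and `β > α·2`.
Then the game `DG^β_{θ,α}` detects membership in `𝒮_θ`: if `(M₀,R₀) ∈ 𝒮_θ` (every
`R₀`-neighbourhood has size `< θ`) and `(M₁,R₁) ∉ 𝒮_θ`, then Adam has a winning strategy
in `DG^β_{θ,α}((M₀,R₀),(M₁,R₁))`. -/
theorem adam_wins_detects_small_neighbourhoods
    (M₀ M₁ : Type u) (R₀ : M₀ → M₀ → Prop) (R₁ : M₁ → M₁ → Prop)
    (θ : Cardinal.{u}) (α β : Ordinal.{u})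
    (hcof : Cardinal.aleph0 < θ.ord.cof)
    (hα : α.card ≤ Cardinal.aleph0)
    (hβ : α * 2 < β)
    (h₀ : ∀ a : M₀, #{b : M₀ | R₀ a b} < θ)
    (h₁ : ¬ ∀ a : M₁, #{b : M₁ | R₁ a b} < θ) :
    AdamWinsGame R₀ R₁ β θ α := by
  push Not at h₁
  obtain ⟨a₁, ha₁⟩ := h₁
  have hθ₁ : #({a₁} : Set M₁) ≤ θ :=
    (mk_singleton a₁).trans_le (one_le_aleph0.trans (hcof.le.trans (Ordinal.cof_ord_le θ)))
  refine .step _ (α * 2) hβ ∅ {a₁} (by simp) hθ₁ fun q _ hq _ hqa₁ => ?_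
  have hlt : q.h1 a₁ < α := q.h1_lt a₁ (hqa₁ rfl)
  refine adamWinsFrom_of_le_mk_neighbours hcof hα h₀ ha₁ q (hqa₁ rfl) ?_
  rw [hq, Ordinal.mul_two]
  exact (add_lt_add_iff_left α).2 hlt
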